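/- arXiv:2403.10111 — 2 statements merged into one kernel-verified Lean document; each statement's English description precedes it below -/
import Mathlib

section
/- Additive strongly convex potentials satisfy Assumption (A3): suppose V is additive and satisfies (A2). Then for every j=1,…,d and every i with i,i+he_j∈𝒦_h one has κ₊(i,j) ≥ (σ²/h²)·exp(−(V_j^h(i_j+h)−V_j^h(i_j))/(2σ²))·(1−exp(−κh²/(2σ²))) > 0, and for every i with i,i−he_j∈𝒦_h one has κ₋(i,j) ≥ (σ²/h²)·exp(−(V_j^h(i_j−h)−V_j^h(i_j))/(2σ²))·(1−exp(−κh²/(2σ²))) > 0; in particular Assumption (A3) holds. -/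
open scoped BigOperators Classical RealInnerProductSpace
open Finset MeasureTheory

noncomputable section

/-- Points of the state space `ℝᵈ` with the Euclidean norm. -/
abbrev Pt (d : ℕ) : Type := EuclideanSpace ℝ (Fin d)

/-- The set `G` of moves `+_j`, `-_j`. -/
inductive Move (d : ℕ) : Type where
  | pos : Fin d → Move d
  | neg : Fin d → Move d
  deriving DecidableEq, Fintype

namespace Move

/-- The direction of a move. -/
def dir {d : ℕ} : Move d → Fin d
  | pos j => j
  | neg j => j

/-- Action of a move on `ℝᵈ`: `(±_j) x = x ± h eⱼ`. -/
def act {d : ℕ} (h : ℝ) : Move d → Pt d → Pt d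
  | pos j, x => x + EuclideanSpace.single j h
  | neg j, x => x - EuclideanSpace.single j h

end Move

/-- Action of a move in `G ∪ {e}` (`none` is the null move `e`). -/
def actO {d : ℕ} (h : ℝ) : Option (Move d) → Pt d → Pt d
  | none, x => x
  | some γ, x => γ.act h x

/-- The grid `𝒦_h` of cell centers, where `N = 2K/h`. -/
def grid (d : ℕ) (K h : ℝ) (N : ℕ) : Finset (Pt d) :=
  Finset.image
    (fun n : Fin d → Fin N =>
      (EuclideanSpace.equiv (Fin d) ℝ).symm fun j => -K + h * ((n j : ℕ) + 1) - h / 2)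
    Finset.univ

/-- The averaged potential `V^h`. -/
def Vh {d : ℕ} (h : ℝ) (V : Pt d → ℝ) (x : Pt d) : ℝ :=
  (1 / h ^ d) * ∫ s in {s : Pt d | ∀ j, s j ∈ Set.Icc (-(h / 2)) (h / 2)}, V (x + s)

/-- The one-dimensional averaged potential `V_j^h`. -/
def Vjh (h : ℝ) (W : ℝ → ℝ) (x : ℝ) : ℝ :=
  (1 / h) * ∫ s in Set.Icc (-(h / 2)) (h / 2), W (x + s)

/-- The transition rates `c(x, γ)`. -/
def rate (d : ℕ) (K h σ : ℝ) (N : ℕ) (V : Pt d → ℝ) (x : Pt d) (γ : Move d) : ℝ :=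
  if x ∈ grid d K h N ∧ γ.act h x ∈ grid d K h N then
    σ ^ 2 / h ^ 2 * Real.exp (-(Vh h V (γ.act h x) - Vh h V x) / (2 * σ ^ 2))
  else 0

/-- The generator `L_h`. -/
def gen (d : ℕ) (K h σ : ℝ) (N : ℕ) (V : Pt d → ℝ) (f : Pt d → ℝ) (i : Pt d) : ℝ :=
  ∑ γ : Move d, rate d K h σ N V i γ * (f (γ.act h i) - f i)

/-- The normalization constant `Z`. -/
def Znorm (d : ℕ) (K h σ : ℝ) (N : ℕ) (V : Pt d → ℝ) : ℝ :=
  ∑ k ∈ grid d K h N, Real.exp (-Vh h V k / σ ^ 2)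

/-- The invariant measure `m_h`. -/
def mh (d : ℕ) (K h σ : ℝ) (N : ℕ) (V : Pt d → ℝ) (i : Pt d) : ℝ :=
  Real.exp (-Vh h V i / σ ^ 2) / Znorm d K h σ N V

/-- `κ₊(i,j)`. -/
def kplus (d : ℕ) (K h σ : ℝ) (N : ℕ) (V : Pt d → ℝ) (i : Pt d) (j : Fin d) : ℝ :=
  rate d K h σ N V i (Move.pos j) - rate d K h σ N V ((Move.pos j).act h i) (Move.pos j)
    - ∑ γ ∈ Finset.univ.filter fun γ : Move d => γ.dir ≠ j,
        max (rate d K h σ N V ((Move.pos j).act h i) γ - rate d K h σ N V i γ) 0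

/-- `κ₋(i,j)`. -/
def kminus (d : ℕ) (K h σ : ℝ) (N : ℕ) (V : Pt d → ℝ) (i : Pt d) (j : Fin d) : ℝ :=
  rate d K h σ N V i (Move.neg j) - rate d K h σ N V ((Move.neg j).act h i) (Move.neg j)
    - ∑ γ ∈ Finset.univ.filter fun γ : Move d => γ.dir ≠ j,
        max (rate d K h σ N V ((Move.neg j).act h i) γ - rate d K h σ N V i γ) 0

/-- Assumption (A3). -/
def A3 (d : ℕ) (K h σ : ℝ) (N : ℕ) (V : Pt d → ℝ) : Prop :=
  (∀ j : Fin d, ∀ i ∈ grid d K h N, (Move.pos j).act h i ∈ grid d K h N →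
      0 < kplus d K h σ N V i j) ∧
  (∀ j : Fin d, ∀ i ∈ grid d K h N, (Move.neg j).act h i ∈ grid d K h N →
      0 < kminus d K h σ N V i j)

/-- `κ_φ = min {κ₊(i,j) + κ₋(i+heⱼ,j)}`. -/
def kappaPhi (d : ℕ) (K h σ : ℝ) (N : ℕ) (V : Pt d → ℝ) : ℝ :=
  sInf { r : ℝ | ∃ j : Fin d, ∃ i ∈ grid d K h N, (Move.pos j).act h i ∈ grid d K h N ∧
    r = kplus d K h σ N V i j + kminus d K h σ N V ((Move.pos j).act h i) j }

/-- The φ-entropy `H^φ(f | m_h)`. -/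
def entPhi (d : ℕ) (K h σ : ℝ) (N : ℕ) (V : Pt d → ℝ) (φ : ℝ → ℝ) (f : Pt d → ℝ) : ℝ :=
  ∑ i ∈ grid d K h N, φ (f i) * mh d K h σ N V i
    - φ (∑ i ∈ grid d K h N, f i * mh d K h σ N V i)

/-- The Dirichlet form `E(f,g)`. -/
def dirichlet (d : ℕ) (K h σ : ℝ) (N : ℕ) (V : Pt d → ℝ) (f g : Pt d → ℝ) : ℝ :=
  -∑ i ∈ grid d K h N, f i * gen d K h σ N V g i * mh d K h σ N V i

/-- Assumption (A1) on the entropy density `φ`. -/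
def A1 (φ : ℝ → ℝ) : Prop :=
  ContinuousOn φ (Set.Ici 0) ∧ (∀ x ∈ Set.Ici (0 : ℝ), 0 ≤ φ x) ∧
  ConvexOn ℝ (Set.Ici 0) φ ∧
  (∀ x ∈ Set.Ioi (0 : ℝ), DifferentiableAt ℝ φ x) ∧
  ContinuousOn (deriv φ) (Set.Ioi 0) ∧
  ConvexOn ℝ (Set.Ioi 0 ×ˢ Set.Ioi 0)
    (fun p : ℝ × ℝ => (deriv φ p.1 - deriv φ p.2) * (p.1 - p.2))

/-- φ is continuous, nonnegative and convex on `[0,∞)`, and C¹ on `(0,∞)`. -/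
def PhiRegular (φ : ℝ → ℝ) : Prop :=
  ContinuousOn φ (Set.Ici 0) ∧ (∀ x ∈ Set.Ici (0 : ℝ), 0 ≤ φ x) ∧
  ConvexOn ℝ (Set.Ici 0) φ ∧
  (∀ x ∈ Set.Ioi (0 : ℝ), DifferentiableAt ℝ φ x) ∧
  ContinuousOn (deriv φ) (Set.Ioi 0)

/-- `f^φ(x, y) = (φ'(f x) - φ'(f y)) (f x - f y)`. -/
def fphi {d : ℕ} (φ : ℝ → ℝ) (f : Pt d → ℝ) (x y : Pt d) : ℝ :=
  (deriv φ (f x) - deriv φ (f y)) * (f x - f y)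

/-- Coupling rates `𝐜(i, i+heⱼ, γ, γ̄)` for the neighboring pair `(i, i+heⱼ)`. -/
def crate (d : ℕ) (K h σ : ℝ) (N : ℕ) (V : Pt d → ℝ) (i : Pt d) (j : Fin d) :
    Option (Move d) → Option (Move d) → ℝ
  | some a, some b =>
      if a = b then min (rate d K h σ N V i a) (rate d K h σ N V ((Move.pos j).act h i) a)
      else if a = Move.pos j ∧ b.dir ≠ j then
        max (rate d K h σ N V ((Move.pos j).act h i) b - rate d K h σ N V i b) 0
      else if a.dir ≠ j ∧ b = Move.neg j then
        max (rate d K h σ N V i a - rate d K h σ N V ((Move.pos j).act h i) a) 0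
      else 0
  | some a, none => if a = Move.pos j then kplus d K h σ N V i j else 0
  | none, some b => if b = Move.neg j then kminus d K h σ N V ((Move.pos j).act h i) j else 0
  | none, none => 0

/-- Coupling rates `𝐜(i, δ i, γ, γ̄)` for an arbitrary move `δ ∈ G`. -/
def cpl (d : ℕ) (K h σ : ℝ) (N : ℕ) (V : Pt d → ℝ) (i : Pt d) (δ : Move d)
    (γ γb : Option (Move d)) : ℝ :=
  match δ with
  | Move.pos j => crate d K h σ N V i j γ γb
  | Move.neg j => crate d K h σ N V ((Move.neg j).act h i) j γb γ

/-- Synchronous coupling rates `𝐜(i, k, γ, γ̄)`. -/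
def syncRate (d : ℕ) (K h σ : ℝ) (N : ℕ) (V : Pt d → ℝ) (i k : Pt d) :
    Option (Move d) → Option (Move d) → ℝ
  | some a, some b => if a = b then min (rate d K h σ N V i a) (rate d K h σ N V k a) else 0
  | some a, none => max (rate d K h σ N V i a - rate d K h σ N V k a) 0
  | none, some b => max (rate d K h σ N V k b - rate d K h σ N V i b) 0
  | none, none => 0

/-- The graph (ℓ¹) distance. -/
def graphDist {d : ℕ} (x y : Pt d) : ℝ := ∑ j, |x j - y j|

/-- The generator matrix `Q`. -/
def Qmat (d : ℕ) (K h σ : ℝ) (N : ℕ) (V : Pt d → ℝ) :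
    Matrix {x // x ∈ grid d K h N} {x // x ∈ grid d K h N} ℝ := fun i k =>
  (∑ γ : Move d, if γ.act h i.1 = k.1 then rate d K h σ N V i.1 γ else 0)
    - (if i = k then ∑ γ : Move d, rate d K h σ N V i.1 γ else 0)

/-- The semigroup `S_t = e^{tQ}` acting on functions. -/
def St (d : ℕ) (K h σ : ℝ) (N : ℕ) (V : Pt d → ℝ) (t : ℝ) (f : Pt d → ℝ) (i : Pt d) : ℝ :=
  if hi : i ∈ grid d K h N then
    ∑ k : {x // x ∈ grid d K h N},
      NormedSpace.exp (t • Qmat d K h σ N V) ⟨i, hi⟩ k * f k.1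
  else 0

/-- The transition function `ν ↦ ν p_t` acting on measures. -/
def measPt (d : ℕ) (K h σ : ℝ) (N : ℕ) (V : Pt d → ℝ) (t : ℝ) (ν : Pt d → ℝ) (k : Pt d) : ℝ :=
  if hk : k ∈ grid d K h N then
    ∑ i : {x // x ∈ grid d K h N},
      ν i.1 * NormedSpace.exp (t • Qmat d K h σ N V) i ⟨k, hk⟩
  else 0

/-- `ν` is a probability measure on the grid. -/
def IsProbOn (d : ℕ) (K h : ℝ) (N : ℕ) (ν : Pt d → ℝ) : Prop :=
  (∀ x ∈ grid d K h N, 0 ≤ ν x) ∧ ∑ x ∈ grid d K h N, ν x = 1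

/-- Optimal transport cost between `ν` and `η` for the cost function `D`. -/
def Wgen (d : ℕ) (K h : ℝ) (N : ℕ) (D : Pt d → Pt d → ℝ) (ν η : Pt d → ℝ) : ℝ :=
  sInf { r : ℝ | ∃ γc : Pt d → Pt d → ℝ,
    (∀ x ∈ grid d K h N, ∀ y ∈ grid d K h N, 0 ≤ γc x y) ∧
    (∀ x ∈ grid d K h N, ∑ y ∈ grid d K h N, γc x y = ν x) ∧
    (∀ y ∈ grid d K h N, ∑ x ∈ grid d K h N, γc x y = η y) ∧
    r = ∑ x ∈ grid d K h N, ∑ y ∈ grid d K h N, D x y * γc x y }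

/-- The `L^p` Wasserstein distance w.r.t. the Euclidean distance. -/
def Wp (d : ℕ) (K h : ℝ) (N : ℕ) (p : ℝ) (ν η : Pt d → ℝ) : ℝ :=
  (Wgen d K h N (fun x y => ‖x - y‖ ^ p) ν η) ^ (1 / p)

/-- The `L¹` Wasserstein distance w.r.t. the Euclidean distance. -/
def W1 (d : ℕ) (K h : ℝ) (N : ℕ) (ν η : Pt d → ℝ) : ℝ :=
  Wgen d K h N (fun x y => ‖x - y‖) ν η

/-- The `L¹` Wasserstein distance w.r.t. the graph distance. -/
def Wd1 (d : ℕ) (K h : ℝ) (N : ℕ) (ν η : Pt d → ℝ) : ℝ :=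
  Wgen d K h N graphDist ν η

/-- The rescaling factor `𝒯 = 2 max_i Σ_γ c(i,γ)`. -/
def Tcal (d : ℕ) (K h σ : ℝ) (N : ℕ) (V : Pt d → ℝ) : ℝ :=
  2 * sSup ((fun i => ∑ γ : Move d, rate d K h σ N V i γ) '' (grid d K h N : Set (Pt d)))

/-- The time step `τ = 1/𝒯`. -/
def tauStep (d : ℕ) (K h σ : ℝ) (N : ℕ) (V : Pt d → ℝ) : ℝ :=
  1 / Tcal d K h σ N V

/-- The rescaled jump rates `p(i,γ) = c(i,γ)/𝒯`. -/
def prate (d : ℕ) (K h σ : ℝ) (N : ℕ) (V : Pt d → ℝ) (i : Pt d) (γ : Move d) : ℝ :=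
  rate d K h σ N V i γ / Tcal d K h σ N V

/-- The transition matrix `π` acting on functions: `(π f)(i) = Σ_k π(i,k) f(k)`. -/
def piStep (d : ℕ) (K h σ : ℝ) (N : ℕ) (V : Pt d → ℝ) (f : Pt d → ℝ) (i : Pt d) : ℝ :=
  f i + ∑ γ : Move d, prate d K h σ N V i γ * (f (γ.act h i) - f i)

/-- The entries `π(i,k)` of the transition matrix. -/
def piKernel (d : ℕ) (K h σ : ℝ) (N : ℕ) (V : Pt d → ℝ) (i k : Pt d) : ℝ :=
  (∑ γ : Move d, if γ.act h i = k then prate d K h σ N V i γ else 0)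
    + (if i = k then 1 - ∑ γ : Move d, prate d K h σ N V i γ else 0)

/-- The transition matrix `π` acting on measures: `(ν π)(k) = Σ_i ν(i) π(i,k)`. -/
def piMeas (d : ℕ) (K h σ : ℝ) (N : ℕ) (V : Pt d → ℝ) (ν : Pt d → ℝ) (k : Pt d) : ℝ :=
  if k ∈ grid d K h N then ∑ i ∈ grid d K h N, ν i * piKernel d K h σ N V i k else 0

/-- The Fisher information `F(f)`. -/
def fisher (d : ℕ) (K h σ : ℝ) (N : ℕ) (V : Pt d → ℝ) (φ : ℝ → ℝ) (f : Pt d → ℝ) : ℝ :=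
  (1 / 2) * ∑ i ∈ grid d K h N, ∑ γ : Move d,
    prate d K h σ N V i γ * (deriv φ (f (γ.act h i)) - deriv φ (f i))
      * (f (γ.act h i) - f i) * mh d K h σ N V i

/-- The entropy densities `φ_α` (with `φ₁(x) = x log x - x + 1`). -/
def phiAlpha (α : ℝ) (x : ℝ) : ℝ :=
  if α = 1 then x * Real.log x - x + 1 else (α - 1)⁻¹ * (x ^ α - x) - x + 1

/-- Assumption (A2): strong `κ`-convexity of `V` on `[-K,K]^d`. -/
def A2 (d : ℕ) (K : ℝ) (V : Pt d → ℝ) (κ : ℝ) : Prop :=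
  ∀ x y : Pt d, (∀ j, |x j| ≤ K) → (∀ j, |y j| ≤ K) →
    κ * ‖x - y‖ ^ 2 ≤ ⟪x - y, gradient V x - gradient V y⟫

/-- `V` is additive with components `Vs j`. -/
def IsAdditive (d : ℕ) (V : Pt d → ℝ) (Vs : Fin d → ℝ → ℝ) : Prop :=
  ∀ x : Pt d, V x = ∑ j, Vs j (x j)

/-- `∇V` is Lipschitz continuous with constant `L` on `[-K,K]^d`. -/
def GradLip (d : ℕ) (K : ℝ) (V : Pt d → ℝ) (L : ℝ) : Prop :=
  ∀ x y : Pt d, (∀ j, |x j| ≤ K) → (∀ j, |y j| ≤ K) →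
    ‖gradient V x - gradient V y‖ ≤ L * ‖x - y‖

/-- The basic assumptions on the discretization parameters. -/
def Params (d : ℕ) (K h σ : ℝ) (N : ℕ) (V : Pt d → ℝ) : Prop :=
  1 ≤ d ∧ 0 < K ∧ 0 < h ∧ (N : ℝ) * h = 2 * K ∧ 0 < σ ∧ ContDiff ℝ 2 V

/-- The discrete-time coupling `𝐩` for the neighboring pair `(i, i+heⱼ)`. -/
def pcoup (d : ℕ) (K h σ : ℝ) (N : ℕ) (V : Pt d → ℝ) (i : Pt d) (j : Fin d)
    (q : Option (Move d) × Option (Move d)) : ℝ :=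
  if q = (none, none) then
    1 - ∑ q' ∈ Finset.univ.filter
          (fun q' : Option (Move d) × Option (Move d) => q' ≠ (none, none)),
        crate d K h σ N V i j q'.1 q'.2 / Tcal d K h σ N V
  else crate d K h σ N V i j q.1 q.2 / Tcal d K h σ N V

end

/-!
For an additive potential `V^h = Σⱼ V_j^h`, so a move in direction `j` changes only the `j`-th
summand. Hence the rates of the moves in the other directions agree at `i` and at `i ± h eⱼ`, the
correction sum in `κ±(i, j)` vanishes, and `κ±(i, j) = c(i, ±ⱼ) - c(i ± h eⱼ, ±ⱼ)`. Restricting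
(A2) to a coordinate axis gives `κ (a - b)² ≤ (a - b) (V_j'(a) - V_j'(b))`, so the second
differences with step `h` of `V_j`, and hence of its cell average `V_j^h`, are at least `κ h²`.
This is exactly `c(i ± h eⱼ, ±ⱼ) ≤ c(i, ±ⱼ) exp(-κ h² / (2σ²))`.
-/

namespace Move

variable {d : ℕ} (h : ℝ)

lemma act_apply_of_ne (γ : Move d) (x : Pt d) {m : Fin d} (hm : m ≠ γ.dir) :
    (γ.act h x) m = x m := by
  cases γ <;> simp [act, dir] at hm ⊢ <;> simp [hm]

@[simp]
lemma pos_act_apply_self (j : Fin d) (x : Pt d) : ((pos j).act h x) j = x j + h := by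
  simp [act]

@[simp]
lemma neg_act_apply_self (j : Fin d) (x : Pt d) : ((neg j).act h x) j = x j - h := by
  simp [act]

lemma act_comm (γ δ : Move d) (x : Pt d) : γ.act h (δ.act h x) = δ.act h (γ.act h x) := by
  cases γ <;> cases δ <;> simp only [act] <;> abel

end Move

def gridCoord (K h : ℝ) (N : ℕ) : Set ℝ :=
  Set.range fun n : Fin N => -K + h * ((n : ℕ) + 1) - h / 2

lemma mem_grid_iff {d : ℕ} {K h : ℝ} {N : ℕ} {x : Pt d} :
    x ∈ grid d K h N ↔ ∀ j, x j ∈ gridCoord K h N := by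
  simp only [grid, Finset.mem_image, Finset.mem_univ, true_and, gridCoord, Set.mem_range]
  constructor
  · rintro ⟨n, rfl⟩ j
    exact ⟨n j, rfl⟩
  · intro hx
    choose n hn using hx
    exact ⟨n, by ext j; exact hn j⟩

lemma mem_Icc_of_mem_gridCoord {K h : ℝ} {N : ℕ} (hh : 0 ≤ h) (hN : (N : ℝ) * h = 2 * K)
    {a : ℝ} (ha : a ∈ gridCoord K h N) : a ∈ Set.Icc (-K + h / 2) (K - h / 2) := by
  obtain ⟨n, rfl⟩ := ha
  have hn : ((n : ℕ) : ℝ) + 1 ≤ N := by exact_mod_cast n.2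
  constructor <;> nlinarith [(Nat.cast_nonneg (n : ℕ) : (0 : ℝ) ≤ _)]

lemma act_act_mem_grid_iff {d : ℕ} {K h : ℝ} {N : ℕ} {i : Pt d} {γ δ : Move d}
    (hi : i ∈ grid d K h N) (hγi : γ.act h i ∈ grid d K h N) (hδγ : δ.dir ≠ γ.dir) :
    δ.act h (γ.act h i) ∈ grid d K h N ↔ δ.act h i ∈ grid d K h N := by
  have hcoord : ∀ m, (δ.act h (γ.act h i)) m ∈ gridCoord K h N ↔
      (δ.act h i) m ∈ gridCoord K h N := by
    intro m
    rcases eq_or_ne m γ.dir with rfl | hm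
    · rw [Move.act_apply_of_ne h δ _ hδγ.symm, Move.act_apply_of_ne h δ _ hδγ.symm]
      exact iff_of_true (mem_grid_iff.mp hγi _) (mem_grid_iff.mp hi _)
    · rw [Move.act_comm, Move.act_apply_of_ne h γ _ hm]
  simp only [mem_grid_iff, hcoord]

lemma integral_comp_eval_pi {ι α E : Type*} [Fintype ι] [DecidableEq ι] [MeasurableSpace α]
    [NormedAddCommGroup E] [NormedSpace ℝ E] (μ : ι → Measure α) [∀ i, SigmaFinite (μ i)]
    {f : α → E} (j : ι) (hf : AEStronglyMeasurable f (μ j)) :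
    ∫ x, f (x j) ∂Measure.pi μ =
      (∏ i ∈ Finset.univ.erase j, (μ i).real Set.univ) • ∫ a, f a ∂μ j := by
  rw [← integral_map (measurable_pi_apply j).aemeasurable, Measure.pi_map_eval,
    integral_smul_measure, ENNReal.toReal_prod]
  · rfl
  · rw [Measure.pi_map_eval]
    exact hf.smul_measure _

lemma setIntegral_euclidean_cube_comp_apply {ι E : Type*} [Fintype ι] [NormedAddCommGroup E]
    [NormedSpace ℝ E] (S : Set ℝ) {f : ℝ → E} (j : ι)
    (hf : AEStronglyMeasurable f (volume.restrict S)) :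
    ∫ s in {s : EuclideanSpace ℝ ι | ∀ m, s m ∈ S}, f (s j) =
      volume.real S ^ (Fintype.card ι - 1) • ∫ a in S, f a := by
  classical
  have hpre : WithLp.toLp 2 ⁻¹' {s : EuclideanSpace ℝ ι | ∀ m, s m ∈ S} =
      Set.univ.pi fun _ => S := by
    ext t; simp
  rw [← (PiLp.volume_preserving_toLp ι).setIntegral_preimage_emb
      (MeasurableEquiv.toLp 2 (ι → ℝ)).measurableEmbedding, hpre, volume_pi,
    Measure.restrict_pi_pi, integral_comp_eval_pi _ j hf, Finset.prod_const,
    Finset.card_erase_of_mem (Finset.mem_univ j), Finset.card_univ, Measure.real,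
    Measure.restrict_apply_univ]
  rfl

lemma isCompact_euclidean_cube {ι : Type*} [Fintype ι] {S : Set ℝ} (hS : IsCompact S) :
    IsCompact {s : EuclideanSpace ℝ ι | ∀ m, s m ∈ S} := by
  convert (isCompact_univ_pi fun _ : ι => hS).image (PiLp.continuous_toLp 2 fun _ => ℝ) using 1
  ext s
  exact ⟨fun hs => ⟨s.ofLp, fun m _ => hs m, rfl⟩, by rintro ⟨t, ht, rfl⟩ m; exact ht m trivial⟩

section SecondDifference

variable {W : ℝ → ℝ} {κ h x : ℝ}

lemma le_second_diff_of_deriv (hW : ContDiff ℝ 1 W) (hh : 0 < h)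
    (hW' : ∀ a ∈ Set.Icc (x - h) (x + h), ∀ b ∈ Set.Icc (x - h) (x + h),
      κ * (a - b) ^ 2 ≤ (a - b) * (deriv W a - deriv W b)) :
    κ * h ^ 2 ≤ W (x - h) + W (x + h) - 2 * W x := by
  have hd : Differentiable ℝ W := hW.differentiable one_ne_zero
  have hc : Continuous fun t => deriv W (t + h) - deriv W t :=
    ((hW.continuous_deriv le_rfl).comp (continuous_add_const h)).sub
      (hW.continuous_deriv le_rfl)
  have hftc : ∫ t in (x - h)..x, (deriv W (t + h) - deriv W t) =
      (W (x + h) - W x) - (W x - W (x - h)) := by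
    rw [intervalIntegral.integral_eq_sub_of_hasDerivAt
      (f := fun t => W (t + h) - W t) (fun t _ => ((hd _).hasDerivAt.comp_add_const t h).sub
        (hd t).hasDerivAt) (hc.intervalIntegrable _ _)]
    simp only [sub_add_cancel]
  have hlow : ∀ t ∈ Set.Icc (x - h) x, κ * h ≤ deriv W (t + h) - deriv W t := by
    rintro t ⟨ht₁, ht₂⟩
    have := hW' (t + h) ⟨by linarith, by linarith⟩ t ⟨ht₁, by linarith⟩
    rw [add_sub_cancel_left] at this
    nlinarith
  have := intervalIntegral.integral_mono_on (μ := volume) (by linarith) intervalIntegrable_const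
    (hc.intervalIntegrable _ _) hlow
  rw [intervalIntegral.integral_const, smul_eq_mul, hftc] at this
  nlinarith

lemma le_Vjh_second_diff (hW : ContDiff ℝ 1 W) (hh : 0 < h)
    (hW' : ∀ a ∈ Set.Icc (x - 3 * h / 2) (x + 3 * h / 2),
      ∀ b ∈ Set.Icc (x - 3 * h / 2) (x + 3 * h / 2),
        κ * (a - b) ^ 2 ≤ (a - b) * (deriv W a - deriv W b)) :
    κ * h ^ 2 ≤ Vjh h W (x - h) + Vjh h W (x + h) - 2 * Vjh h W x := by
  set S := Set.Icc (-(h / 2)) (h / 2)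
  have hint : ∀ c, IntegrableOn (fun s => W (c + s)) S := fun c =>
    (hW.continuous.comp (continuous_const_add c)).continuousOn.integrableOn_compact isCompact_Icc
  have hpt : ∀ s ∈ S, κ * h ^ 2 ≤ W (x - h + s) + W (x + h + s) - 2 * W (x + s) := by
    rintro s ⟨hs₁, hs₂⟩
    have hsub : Set.Icc (x + s - h) (x + s + h) ⊆ Set.Icc (x - 3 * h / 2) (x + 3 * h / 2) :=
      Set.Icc_subset_Icc (by linarith) (by linarith)
    have := le_second_diff_of_deriv hW hh (x := x + s)
      fun a ha b hb => hW' a (hsub ha) b (hsub hb)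
    rwa [sub_add_eq_add_sub, add_right_comm x h s]
  have hmono : ∫ _ in S, κ * h ^ 2 ≤ ∫ s in S, (W (x - h + s) + W (x + h + s) - 2 * W (x + s)) :=
    setIntegral_mono_on (integrableOn_const isCompact_Icc.measure_lt_top.ne)
      (((hint _).add (hint _)).sub ((hint _).const_mul 2)) measurableSet_Icc hpt
  rw [setIntegral_const, Real.volume_real_Icc, sub_neg_eq_add, add_halves, max_eq_left hh.le,
    integral_sub (f := fun s => W (x - h + s) + W (x + h + s)) ((hint _).add (hint _))
      ((hint _).const_mul 2), integral_add (hint _) (hint _),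
    integral_const_mul, smul_eq_mul] at hmono
  simp only [Vjh]
  have := mul_le_mul_of_nonneg_left hmono (one_div_pos.mpr hh).le
  field_simp at this ⊢
  linarith

lemma le_Vjh_second_diff_of_mem_gridCoord {K : ℝ} {N : ℕ} (hW : ContDiff ℝ 1 W) (hh : 0 < h)
    (hN : (N : ℝ) * h = 2 * K)
    (hW' : ∀ a ∈ Set.Icc (-K) K, ∀ b ∈ Set.Icc (-K) K,
      κ * (a - b) ^ 2 ≤ (a - b) * (deriv W a - deriv W b))
    (hl : x - h ∈ gridCoord K h N) (hr : x + h ∈ gridCoord K h N) :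
    κ * h ^ 2 ≤ Vjh h W (x - h) + Vjh h W (x + h) - 2 * Vjh h W x := by
  have hl' := mem_Icc_of_mem_gridCoord hh.le hN hl
  have hr' := mem_Icc_of_mem_gridCoord hh.le hN hr
  have hsub : Set.Icc (x - 3 * h / 2) (x + 3 * h / 2) ⊆ Set.Icc (-K) K :=
    Set.Icc_subset_Icc (by linarith [hl'.1]) (by linarith [hr'.2])
  exact le_Vjh_second_diff hW hh fun a ha b hb => hW' a (hsub ha) b (hsub hb)

end SecondDifference

noncomputable def kappaMove (d : ℕ) (K h σ : ℝ) (N : ℕ) (V : Pt d → ℝ) (i : Pt d)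
    (γ : Move d) : ℝ :=
  rate d K h σ N V i γ - rate d K h σ N V (γ.act h i) γ
    - ∑ δ ∈ Finset.univ.filter fun δ : Move d => δ.dir ≠ γ.dir,
        max (rate d K h σ N V (γ.act h i) δ - rate d K h σ N V i δ) 0

section Rates

variable {d : ℕ} {K h σ : ℝ} {N : ℕ} {V : Pt d → ℝ} {Vs : Fin d → ℝ → ℝ}

lemma kplus_eq_kappaMove (i : Pt d) (j : Fin d) :
    kplus d K h σ N V i j = kappaMove d K h σ N V i (Move.pos j) := rfl

lemma kminus_eq_kappaMove (i : Pt d) (j : Fin d) :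
    kminus d K h σ N V i j = kappaMove d K h σ N V i (Move.neg j) := rfl

lemma rate_nonneg (x : Pt d) (γ : Move d) : 0 ≤ rate d K h σ N V x γ := by
  unfold rate
  split_ifs <;> positivity

lemma rate_pos (hσ : 0 < σ) (hh : 0 < h) {x : Pt d} {γ : Move d} (hx : x ∈ grid d K h N)
    (hγx : γ.act h x ∈ grid d K h N) : 0 < rate d K h σ N V x γ := by
  rw [rate, if_pos ⟨hx, hγx⟩]
  positivity

lemma Vh_eq_sum_Vjh (hh : 0 < h) (hVs : ∀ j, Continuous (Vs j)) (hadd : IsAdditive d V Vs)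
    (x : Pt d) : Vh h V x = ∑ j, Vjh h (Vs j) (x j) := by
  set S := Set.Icc (-(h / 2)) (h / 2)
  have hcube : ∀ j, ∫ s in {s : Pt d | ∀ m, s m ∈ S}, Vs j (x j + s j) =
      h ^ (d - 1) * ∫ u in S, Vs j (x j + u) := by
    intro j
    rw [setIntegral_euclidean_cube_comp_apply S j (f := fun u => Vs j (x j + u))
      ((hVs j).comp (continuous_const_add _)).aestronglyMeasurable, Real.volume_real_Icc,
      max_eq_left (by linarith), Fintype.card_fin, smul_eq_mul, sub_neg_eq_add, add_halves]
  have hint : ∀ j, IntegrableOn (fun s : Pt d => Vs j (x j + s j)) {s | ∀ m, s m ∈ S} :=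
    fun j => (((hVs j).comp (continuous_const_add _)).comp
      (continuous_apply j |>.comp (PiLp.continuous_ofLp 2 _))).continuousOn.integrableOn_compact
      (isCompact_euclidean_cube isCompact_Icc)
  have hV : ∀ y, V y = ∑ j, Vs j (y j) := hadd
  simp only [Vh, hV, PiLp.add_apply]
  rw [integral_finsetSum _ fun j _ => hint j, Finset.mul_sum]
  refine Finset.sum_congr rfl fun j _ => ?_
  have hd : h ^ d = h * h ^ (d - 1) := by rw [← pow_succ', Nat.sub_add_cancel j.pos]
  rw [hcube, Vjh, hd]
  field_simp
  rfl

lemma Vh_act_sub (hh : 0 < h) (hVs : ∀ j, Continuous (Vs j)) (hadd : IsAdditive d V Vs)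
    (γ : Move d) (x : Pt d) :
    Vh h V (γ.act h x) - Vh h V x =
      Vjh h (Vs γ.dir) ((γ.act h x) γ.dir) - Vjh h (Vs γ.dir) (x γ.dir) := by
  rw [Vh_eq_sum_Vjh hh hVs hadd, Vh_eq_sum_Vjh hh hVs hadd, ← Finset.sum_sub_distrib,
    Finset.sum_eq_single γ.dir (fun m _ hm => by rw [Move.act_apply_of_ne h γ x hm, sub_self])
      (fun hγ => absurd (Finset.mem_univ _) hγ)]

lemma rate_eq_of_mem (hh : 0 < h) (hVs : ∀ j, Continuous (Vs j)) (hadd : IsAdditive d V Vs)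
    {x : Pt d} {γ : Move d} (hx : x ∈ grid d K h N) (hγx : γ.act h x ∈ grid d K h N) :
    rate d K h σ N V x γ = σ ^ 2 / h ^ 2 *
      Real.exp (-(Vjh h (Vs γ.dir) ((γ.act h x) γ.dir) - Vjh h (Vs γ.dir) (x γ.dir)) /
        (2 * σ ^ 2)) := by
  rw [rate, if_pos ⟨hx, hγx⟩, Vh_act_sub hh hVs hadd]

lemma rate_act_of_dir_ne (hh : 0 < h) (hVs : ∀ j, Continuous (Vs j)) (hadd : IsAdditive d V Vs)
    {i : Pt d} {γ δ : Move d} (hi : i ∈ grid d K h N) (hγi : γ.act h i ∈ grid d K h N)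
    (hδγ : δ.dir ≠ γ.dir) :
    rate d K h σ N V (γ.act h i) δ = rate d K h σ N V i δ := by
  simp only [rate, act_act_mem_grid_iff hi hγi hδγ, hi, hγi, true_and]
  split_ifs
  · rw [Vh_act_sub hh hVs hadd, Vh_act_sub hh hVs hadd, Move.act_comm,
      Move.act_apply_of_ne h γ _ hδγ, Move.act_apply_of_ne h γ _ hδγ]
  · rfl

lemma kappaMove_eq_of_isAdditive (hh : 0 < h) (hVs : ∀ j, Continuous (Vs j))
    (hadd : IsAdditive d V Vs) {i : Pt d} {γ : Move d} (hi : i ∈ grid d K h N)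
    (hγi : γ.act h i ∈ grid d K h N) :
    kappaMove d K h σ N V i γ = rate d K h σ N V i γ - rate d K h σ N V (γ.act h i) γ := by
  rw [kappaMove, Finset.sum_eq_zero fun δ hδ => by
    rw [rate_act_of_dir_ne hh hVs hadd hi hγi (Finset.mem_filter.mp hδ).2, sub_self, max_self],
    sub_zero]

lemma gradient_apply_of_isAdditive (hVs : ∀ j, Differentiable ℝ (Vs j))
    (hadd : IsAdditive d V Vs) (z : Pt d) (j : Fin d) :
    gradient V z j = deriv (Vs j) (z j) := by
  have hV : V = fun x => ∑ m, Vs m (x m) := funext hadd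
  have hder : HasFDerivAt V
      (∑ m, deriv (Vs m) (z m) • (EuclideanSpace.proj m : Pt d →L[ℝ] ℝ)) z := by
    rw [hV]
    exact HasFDerivAt.fun_sum fun m _ =>
      (hVs m (z m)).hasDerivAt.comp_hasFDerivAt z (EuclideanSpace.proj (𝕜 := ℝ) m).hasFDerivAt
  have hcoord : gradient V z j = fderiv ℝ V z (EuclideanSpace.single j 1) := by
    rw [gradient, ← InnerProductSpace.toDual_symm_apply, EuclideanSpace.inner_single_right]
    simp
  rw [hcoord, hder.fderiv]
  simp [PiLp.single_apply]

lemma deriv_strongly_monotoneOn_of_A2 {κ : ℝ} (hK : 0 ≤ K) (hVs : ∀ j, Differentiable ℝ (Vs j))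
    (hadd : IsAdditive d V Vs) (hA2 : A2 d K V κ) (j : Fin d) :
    ∀ a ∈ Set.Icc (-K) K, ∀ b ∈ Set.Icc (-K) K,
      κ * (a - b) ^ 2 ≤ (a - b) * (deriv (Vs j) a - deriv (Vs j) b) := by
  have hbox : ∀ c ∈ Set.Icc (-K) K, ∀ m, |(EuclideanSpace.single j c : Pt d) m| ≤ K := by
    intro c hc m
    rw [PiLp.single_apply]
    split_ifs
    · exact abs_le.2 hc
    · simpa using hK
  intro a ha b hb
  have := hA2 _ _ (hbox a ha) (hbox b hb)
  rw [← PiLp.single_sub, PiLp.norm_single, Real.norm_eq_abs, sq_abs,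
    EuclideanSpace.inner_single_left, PiLp.sub_apply, gradient_apply_of_isAdditive hVs hadd,
    gradient_apply_of_isAdditive hVs hadd] at this
  simpa using this

lemma rate_act_le {κ : ℝ} (hh : 0 < h) (hN : (N : ℝ) * h = 2 * K)
    (hVs : ∀ j, ContDiff ℝ 1 (Vs j)) (hadd : IsAdditive d V Vs)
    (hVs' : ∀ j, ∀ a ∈ Set.Icc (-K) K, ∀ b ∈ Set.Icc (-K) K,
      κ * (a - b) ^ 2 ≤ (a - b) * (deriv (Vs j) a - deriv (Vs j) b))
    {i : Pt d} {γ : Move d} (hi : i ∈ grid d K h N) (hγi : γ.act h i ∈ grid d K h N) :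
    rate d K h σ N V (γ.act h i) γ ≤
      rate d K h σ N V i γ * Real.exp (-(κ * h ^ 2) / (2 * σ ^ 2)) := by
  by_cases hγγi : γ.act h (γ.act h i) ∈ grid d K h N
  swap
  · rw [rate, if_neg fun hmem => hγγi hmem.2]
    exact mul_nonneg (rate_nonneg _ _) (Real.exp_pos _).le
  have hc : ∀ j, Continuous (Vs j) := fun j => (hVs j).continuous
  rw [rate_eq_of_mem hh hc hadd hγi hγγi, rate_eq_of_mem hh hc hadd hi hγi, mul_assoc,
    ← Real.exp_add, ← add_div]
  gcongr
  cases γ with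
  | pos j =>
    have := le_Vjh_second_diff_of_mem_gridCoord (x := i j + h) (hVs j) hh hN (hVs' j)
      (by simpa using mem_grid_iff.mp hi j) (by simpa using mem_grid_iff.mp hγγi j)
    simp only [Move.dir, Move.pos_act_apply_self, add_sub_cancel_right] at this ⊢
    linarith
  | neg j =>
    have := le_Vjh_second_diff_of_mem_gridCoord (x := i j - h) (hVs j) hh hN (hVs' j)
      (by simpa using mem_grid_iff.mp hγγi j) (by simpa using mem_grid_iff.mp hi j)
    simp only [Move.dir, Move.neg_act_apply_self, sub_add_cancel] at this ⊢
    linarith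

lemma rate_mul_one_sub_exp_le_kappaMove {κ : ℝ} (hh : 0 < h) (hN : (N : ℝ) * h = 2 * K)
    (hVs : ∀ j, ContDiff ℝ 1 (Vs j)) (hadd : IsAdditive d V Vs)
    (hVs' : ∀ j, ∀ a ∈ Set.Icc (-K) K, ∀ b ∈ Set.Icc (-K) K,
      κ * (a - b) ^ 2 ≤ (a - b) * (deriv (Vs j) a - deriv (Vs j) b))
    {i : Pt d} {γ : Move d} (hi : i ∈ grid d K h N) (hγi : γ.act h i ∈ grid d K h N) :
    rate d K h σ N V i γ * (1 - Real.exp (-(κ * h ^ 2) / (2 * σ ^ 2))) ≤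
      kappaMove d K h σ N V i γ := by
  rw [kappaMove_eq_of_isAdditive hh (fun j => (hVs j).continuous) hadd hi hγi, mul_one_sub]
  linarith [rate_act_le hh hN hVs hadd hVs' (σ := σ) hi hγi]

end Rates

/-- Additive strongly convex potentials satisfy Assumption (A3) (Remark 3.3). -/
theorem additive_potential_satisfies_A3
    (d : ℕ) (K h σ : ℝ) (N : ℕ) (V : Pt d → ℝ) (hp : Params d K h σ N V)
    (Vs : Fin d → ℝ → ℝ) (hVs : ∀ j, ContDiff ℝ 2 (Vs j))
    (hadd : IsAdditive d V Vs) (κ : ℝ) (hκ : 0 < κ) (hA2 : A2 d K V κ) :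
    (∀ j : Fin d, ∀ i ∈ grid d K h N, (Move.pos j).act h i ∈ grid d K h N →
      σ ^ 2 / h ^ 2 * Real.exp (-(Vjh h (Vs j) (i j + h) - Vjh h (Vs j) (i j)) / (2 * σ ^ 2))
          * (1 - Real.exp (-(κ * h ^ 2) / (2 * σ ^ 2)))
        ≤ kplus d K h σ N V i j ∧
      0 < σ ^ 2 / h ^ 2 * Real.exp (-(Vjh h (Vs j) (i j + h) - Vjh h (Vs j) (i j)) / (2 * σ ^ 2))
          * (1 - Real.exp (-(κ * h ^ 2) / (2 * σ ^ 2)))) ∧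
    (∀ j : Fin d, ∀ i ∈ grid d K h N, (Move.neg j).act h i ∈ grid d K h N →
      σ ^ 2 / h ^ 2 * Real.exp (-(Vjh h (Vs j) (i j - h) - Vjh h (Vs j) (i j)) / (2 * σ ^ 2))
          * (1 - Real.exp (-(κ * h ^ 2) / (2 * σ ^ 2)))
        ≤ kminus d K h σ N V i j ∧
      0 < σ ^ 2 / h ^ 2 * Real.exp (-(Vjh h (Vs j) (i j - h) - Vjh h (Vs j) (i j)) / (2 * σ ^ 2))
          * (1 - Real.exp (-(κ * h ^ 2) / (2 * σ ^ 2)))) ∧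
    A3 d K h σ N V := by
  obtain ⟨-, hK, hh, hN, hσ, -⟩ := hp
  have hVs₁ : ∀ j, ContDiff ℝ 1 (Vs j) := fun j => (hVs j).of_le one_le_two
  have hVs' := deriv_strongly_monotoneOn_of_A2 hK.le
    (fun j => (hVs₁ j).differentiable one_ne_zero) hadd hA2
  have hgap : 0 < 1 - Real.exp (-(κ * h ^ 2) / (2 * σ ^ 2)) := by
    rw [sub_pos, Real.exp_lt_one_iff]
    exact div_neg_of_neg_of_pos (neg_neg_of_pos (by positivity)) (by positivity)
  have hmove : ∀ i (γ : Move d), i ∈ grid d K h N → γ.act h i ∈ grid d K h N →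
      rate d K h σ N V i γ * (1 - Real.exp (-(κ * h ^ 2) / (2 * σ ^ 2))) ≤
        kappaMove d K h σ N V i γ ∧
      0 < rate d K h σ N V i γ * (1 - Real.exp (-(κ * h ^ 2) / (2 * σ ^ 2))) :=
    fun i γ hi hγi => ⟨rate_mul_one_sub_exp_le_kappaMove hh hN hVs₁ hadd hVs' hi hγi,
      mul_pos (rate_pos hσ hh hi hγi) hgap⟩
  have hc : ∀ j, Continuous (Vs j) := fun j => (hVs₁ j).continuous
  refine ⟨fun j i hi hγi => ?_, fun j i hi hγi => ?_, fun j i hi hγi => ?_, fun j i hi hγi => ?_⟩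
  · simpa only [rate_eq_of_mem hh hc hadd hi hγi, Move.dir, Move.pos_act_apply_self,
      kplus_eq_kappaMove] using hmove i _ hi hγi
  · simpa only [rate_eq_of_mem hh hc hadd hi hγi, Move.dir, Move.neg_act_apply_self,
      kminus_eq_kappaMove] using hmove i _ hi hγi
  · exact (hmove i _ hi hγi).2.trans_le (hmove i _ hi hγi).1
  · exact (hmove i _ hi hγi).2.trans_le (hmove i _ hi hγi).1
end

section
/- Path-coupling generator estimate for neighboring states: assume (A3). Then for every j=1,…,d and every i with i,i+he_j∈𝒦_h, Σ_{γ,γ̄∈G∪{e}} 𝐜(i,i+he_j,γ,γ̄)·(dist(γi, γ̄(i+he_j)) − dist(i, i+he_j)) = −(κ₊(i,j)+κ₋(i+he_j,j))·h ≤ −κ_φ·dist(i, i+he_j). -/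
open scoped BigOperators Classical RealInnerProductSpace
open Finset MeasureTheory

/-!
Under the coupling, the two walkers either make the same move, move so that they stay at
distance `h`, or one of them stays put. Only the last kind of transition changes the distance:
the pair `(+ⱼ, e)` at rate `κ₊(i,j)` and the pair `(e, -ⱼ)` at rate `κ₋(i+heⱼ,j)` bring the
walkers together, each shortening the distance by `h`. The bound then holds because `κ_φ` is
the minimum of a finite set containing `κ₊(i,j) + κ₋(i+heⱼ,j)`.
-/

namespace Move

variable {d : ℕ}

@[simp]
lemma act_neg_act_pos (h : ℝ) (j : Fin d) (x : Pt d) :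
    (Move.neg j).act h ((Move.pos j).act h x) = x :=
  add_sub_cancel_right x _

lemma act_sub_act (h : ℝ) (a : Move d) (x y : Pt d) : a.act h x - a.act h y = x - y := by
  cases a <;> simp [act]

lemma sub_act_eq (h : ℝ) (a : Move d) (x : Pt d) :
    x - a.act h x = EuclideanSpace.single a.dir (-h) ∨
      x - a.act h x = EuclideanSpace.single a.dir h := by
  cases a <;> simp [act, dir, PiLp.single_neg]

end Move

section GraphDist

variable {d : ℕ}

lemma graphDist_eq_sum_abs_sub (x y : Pt d) : graphDist x y = ∑ m, |(x - y) m| := rfl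

lemma graphDist_congr_sub {x y x' y' : Pt d} (hxy : x - y = x' - y') :
    graphDist x y = graphDist x' y' := by
  rw [graphDist_eq_sum_abs_sub, graphDist_eq_sum_abs_sub, hxy]

@[simp]
lemma graphDist_self (x : Pt d) : graphDist x x = 0 := by
  simp [graphDist]

lemma graphDist_comm (x y : Pt d) : graphDist x y = graphDist y x :=
  Finset.sum_congr rfl fun _ _ => abs_sub_comm _ _

lemma graphDist_of_sub_eq_single (x : Pt d) (k : Fin d) (c : ℝ) {y : Pt d}
    (hxy : x - y = EuclideanSpace.single k c) : graphDist x y = |c| := by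
  simp [graphDist_eq_sum_abs_sub, hxy, apply_ite abs]

lemma graphDist_act_right (h : ℝ) (a : Move d) (x : Pt d) : graphDist x (a.act h x) = |h| := by
  rcases a.sub_act_eq h x with hx | hx <;> simp [graphDist_of_sub_eq_single x _ _ hx]

lemma graphDist_act_left (h : ℝ) (a : Move d) (x : Pt d) : graphDist (a.act h x) x = |h| := by
  rw [graphDist_comm, graphDist_act_right]

lemma graphDist_act_act (h : ℝ) (a : Move d) (x y : Pt d) :
    graphDist (a.act h x) (a.act h y) = graphDist x y :=
  graphDist_congr_sub (a.act_sub_act h x y)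

end GraphDist

section NeighborCoupling

variable (d : ℕ) (K h σ : ℝ) (N : ℕ) (V : Pt d → ℝ) (i : Pt d) (j : Fin d)

noncomputable def crateDistChange (γ γb : Option (Move d)) : ℝ :=
  crate d K h σ N V i j γ γb
    * (graphDist (actO h γ i) (actO h γb ((Move.pos j).act h i))
        - graphDist i ((Move.pos j).act h i))

variable {d K h σ N V i j}

lemma crateDistChange_pos_none :
    crateDistChange d K h σ N V i j (some (Move.pos j)) none = -kplus d K h σ N V i j * |h| := by
  simp [crateDistChange, crate, actO, graphDist_act_right]

lemma crateDistChange_none_neg :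
    crateDistChange d K h σ N V i j none (some (Move.neg j))
      = -kminus d K h σ N V ((Move.pos j).act h i) j * |h| := by
  simp [crateDistChange, crate, actO, graphDist_act_right]

lemma crateDistChange_eq_zero {γ γb : Option (Move d)}
    (h₁ : (γ, γb) ≠ (some (Move.pos j), none)) (h₂ : (γ, γb) ≠ (none, some (Move.neg j))) :
    crateDistChange d K h σ N V i j γ γb = 0 := by
  rcases γ with _ | a <;> rcases γb with _ | b
  · simp [crateDistChange, crate]
  · simp_all [crateDistChange, crate]
  · simp_all [crateDistChange, crate]
  · simp only [crateDistChange, actO]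
    by_cases hab : a = b
    · rw [hab, graphDist_act_act, sub_self, mul_zero]
    by_cases hpos : a = Move.pos j ∧ b.dir ≠ j
    · rw [hpos.1, graphDist_act_right, graphDist_act_right, sub_self, mul_zero]
    by_cases hneg : a.dir ≠ j ∧ b = Move.neg j
    · rw [hneg.2, Move.act_neg_act_pos, graphDist_act_left, graphDist_act_right, sub_self,
        mul_zero]
    simp [crate, hab, hpos, hneg]

theorem sum_crateDistChange :
    ∑ γ, ∑ γb, crateDistChange d K h σ N V i j γ γb
      = -(kplus d K h σ N V i j + kminus d K h σ N V ((Move.pos j).act h i) j) * |h| := by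
  rw [← Fintype.sum_prod_type',
    Finset.sum_eq_add (some (Move.pos j), none) (none, some (Move.neg j)) (by simp)
      (fun p _ hp => crateDistChange_eq_zero hp.1 hp.2) (by simp) (by simp),
    crateDistChange_pos_none, crateDistChange_none_neg]
  ring

lemma kappaPhi_le (hi : i ∈ grid d K h N) (hij : (Move.pos j).act h i ∈ grid d K h N) :
    kappaPhi d K h σ N V ≤ kplus d K h σ N V i j + kminus d K h σ N V ((Move.pos j).act h i) j := by
  refine csInf_le (Set.Finite.bddBelow ?_) ⟨j, i, hi, hij, rfl⟩
  refine ((Finset.univ ×ˢ grid d K h N).finite_toSet.image fun p =>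
    kplus d K h σ N V p.2 p.1 + kminus d K h σ N V ((Move.pos p.1).act h p.2) p.1).subset ?_
  rintro r ⟨j', i', hi', -, rfl⟩
  exact ⟨(j', i'), by simp [hi'], rfl⟩

end NeighborCoupling

theorem path_coupling_generator_estimate_general
    (d : ℕ) (K h σ : ℝ) (N : ℕ) (V : Pt d → ℝ) (hp : Params d K h σ N V)
    (j : Fin d) (i : Pt d)
    (hi : i ∈ grid d K h N) (hij : (Move.pos j).act h i ∈ grid d K h N) :
    (∑ γ : Option (Move d), ∑ γb : Option (Move d),
        crate d K h σ N V i j γ γb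
          * (graphDist (actO h γ i) (actO h γb ((Move.pos j).act h i))
              - graphDist i ((Move.pos j).act h i)))
      = -(kplus d K h σ N V i j + kminus d K h σ N V ((Move.pos j).act h i) j) * h ∧
    -(kplus d K h σ N V i j + kminus d K h σ N V ((Move.pos j).act h i) j) * h
      ≤ -(kappaPhi d K h σ N V) * graphDist i ((Move.pos j).act h i) := by
  have hh : 0 < h := hp.2.2.1
  have hsum := sum_crateDistChange (K := K) (h := h) (σ := σ) (N := N) (V := V) (i := i) (j := j)
  rw [abs_of_pos hh] at hsum
  refine ⟨hsum, ?_⟩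
  rw [graphDist_act_right, abs_of_pos hh]
  simpa only [neg_mul, neg_le_neg_iff] using
    mul_le_mul_of_nonneg_right (kappaPhi_le (σ := σ) (V := V) hi hij) hh.le

/-- Path-coupling generator estimate for neighboring states. -/
theorem path_coupling_generator_estimate
    (d : ℕ) (K h σ : ℝ) (N : ℕ) (V : Pt d → ℝ) (hp : Params d K h σ N V)
    (hA3 : A3 d K h σ N V) (j : Fin d) (i : Pt d)
    (hi : i ∈ grid d K h N) (hij : (Move.pos j).act h i ∈ grid d K h N) :
    (∑ γ : Option (Move d), ∑ γb : Option (Move d),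
        crate d K h σ N V i j γ γb
          * (graphDist (actO h γ i) (actO h γb ((Move.pos j).act h i))
              - graphDist i ((Move.pos j).act h i)))
      = -(kplus d K h σ N V i j + kminus d K h σ N V ((Move.pos j).act h i) j) * h ∧
    -(kplus d K h σ N V i j + kminus d K h σ N V ((Move.pos j).act h i) j) * h
      ≤ -(kappaPhi d K h σ N V) * graphDist i ((Move.pos j).act h i) :=
  path_coupling_generator_estimate_general d K h σ N V hp j i hi hij
end
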